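/- arXiv:math/0511248 — 4 statements merged into one kernel-verified Lean document; each statement's English description precedes it below -/
import Mathlib

section
/- If M is a noncrossing matching on the set {0,2,4,...,4n-2} of even numbers less than 4n, then every block of M consists of two numbers that are not congruent modulo 4. -/
open scoped Classical

def IsMatchingOn (M : Finset (Finset ℕ)) (S : Finset ℕ) : Prop :=
  (∀ b ∈ M, b.card = 2) ∧
  (∀ b ∈ M, ∀ b' ∈ M, b ≠ b' → Disjoint b b') ∧
  (∀ x, x ∈ S ↔ ∃ b ∈ M, x ∈ b)

def Cross (e o : Finset ℕ) : Prop :=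
  (∃ i ∈ e, ∃ k ∈ e, ∃ j ∈ o, ∃ l ∈ o, i < j ∧ j < k ∧ k < l) ∨
  (∃ i ∈ o, ∃ k ∈ o, ∃ j ∈ e, ∃ l ∈ e, i < j ∧ j < k ∧ k < l)

def IsNCMatchingOn (M : Finset (Finset ℕ)) (S : Finset ℕ) : Prop :=
  IsMatchingOn M S ∧ ∀ b ∈ M, ∀ b' ∈ M, b ≠ b' → ¬ Cross b b'

def En (n : ℕ) : Finset ℕ := (Finset.range (2 * n)).image (fun i => 2 * i)

def On (n : ℕ) : Finset ℕ := (Finset.range (2 * n)).image (fun i => 2 * i + 1)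

def IsBasketball (n : ℕ) (Be Bo : Finset (Finset ℕ)) : Prop :=
  IsNCMatchingOn Be (En n) ∧ IsNCMatchingOn Bo (On n) ∧
  ∀ e ∈ Be, (Bo.filter (fun o => Cross e o)).card = 1

def IsNCPartitionOn (Q : Finset (Finset ℕ)) (S : Finset ℕ) : Prop :=
  (∀ b ∈ Q, b.Nonempty) ∧
  (∀ b ∈ Q, ∀ b' ∈ Q, b ≠ b' → Disjoint b b') ∧
  (∀ x, x ∈ S ↔ ∃ b ∈ Q, x ∈ b) ∧
  (∀ b ∈ Q, ∀ b' ∈ Q, b ≠ b' → ¬ Cross b b')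

lemma mem_En {n z : ℕ} : z ∈ En n ↔ z % 2 = 0 ∧ z < 4 * n := by
  simp only [En, Finset.mem_image, Finset.mem_range]
  constructor
  · rintro ⟨i, hi, rfl⟩; omega
  · rintro ⟨h1, h2⟩; exact ⟨z / 2, by omega, by omega⟩

lemma key (n : ℕ) (M : Finset (Finset ℕ)) (hM : IsNCMatchingOn M (En n))
    (b : Finset ℕ) (hb : b ∈ M) (x y : ℕ) (hx : x ∈ b) (hy : y ∈ b)
    (hxy : x < y) : x % 4 ≠ y % 4 := by
  obtain ⟨⟨hcard, hdisj, hcover⟩, hnc⟩ := hM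
  -- b = {x, y}
  have hbeq : ({x, y} : Finset ℕ) = b := by
    apply Finset.eq_of_subset_of_card_le
    · intro z hz
      simp only [Finset.mem_insert, Finset.mem_singleton] at hz
      rcases hz with rfl | rfl <;> assumption
    · rw [hcard b hb, Finset.card_insert_of_notMem (by simp; omega),
        Finset.card_singleton]
  have hxE : x ∈ En n := (hcover x).mpr ⟨b, hb, hx⟩
  have hyE : y ∈ En n := (hcover y).mpr ⟨b, hb, hy⟩
  rw [mem_En] at hxE hyE
  set F : Finset (Finset ℕ) := M.filter (fun c => ∀ z ∈ c, x < z ∧ z < y) with hF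
  set T : Finset ℕ := (Finset.Ioo x y).filter (fun z => z % 2 = 0) with hTdef
  have hT : T = F.biUnion id := by
    ext z
    simp only [hTdef, hF, Finset.mem_filter, Finset.mem_Ioo, Finset.mem_biUnion, id]
    constructor
    · rintro ⟨⟨hxz, hzy⟩, hz2⟩
      have hzE : z ∈ En n := mem_En.mpr ⟨hz2, by omega⟩
      obtain ⟨c, hc, hzc⟩ := (hcover z).mp hzE
      have hcb : c ≠ b := by
        rintro rfl
        have : z ∈ ({x, y} : Finset ℕ) := hbeq ▸ hzc
        simp only [Finset.mem_insert, Finset.mem_singleton] at this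
        omega
      refine ⟨c, ⟨hc, ?_⟩, hzc⟩
      intro w hw
      have hdj := Finset.disjoint_left.mp (hdisj c hc b hb hcb) hw
      have hwx : w ≠ x := fun h => hdj (h ▸ hx)
      have hwy : w ≠ y := fun h => hdj (h ▸ hy)
      have hc1 : ¬ w < x := by
        intro hlt
        exact hnc b hb c hc (Ne.symm hcb)
          (Or.inr ⟨w, hw, z, hzc, x, hx, y, hy, hlt, hxz, hzy⟩)
      have hc2 : ¬ y < w := by
        intro hlt
        exact hnc b hb c hc (Ne.symm hcb)
          (Or.inl ⟨x, hx, y, hy, z, hzc, w, hw, hxz, hzy, hlt⟩)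
      omega
    · rintro ⟨c, ⟨hc, hall⟩, hzc⟩
      have hzE := (hcover z).mpr ⟨c, hc, hzc⟩
      rw [mem_En] at hzE
      exact ⟨hall z hzc, hzE.1⟩
  have hTcard : T.card = 2 * F.card := by
    rw [hT, Finset.card_biUnion]
    · rw [Finset.sum_congr rfl
        (fun c hc => show (id c).card = 2 from hcard c (Finset.mem_filter.mp hc).1),
        Finset.sum_const, smul_eq_mul, mul_comm]
    · intro c hc d hd hcd
      exact hdisj c (Finset.mem_filter.mp hc).1 d (Finset.mem_filter.mp hd).1 hcd
  have hTcard2 : T.card = y / 2 - x / 2 - 1 := by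
    have : T = (Finset.Ioo (x / 2) (y / 2)).image (fun i => 2 * i) := by
      ext z
      simp only [hTdef, Finset.mem_filter, Finset.mem_Ioo, Finset.mem_image]
      constructor
      · rintro ⟨⟨h1, h2⟩, h3⟩
        exact ⟨z / 2, ⟨by omega, by omega⟩, by omega⟩
      · rintro ⟨i, ⟨h1, h2⟩, rfl⟩
        omega
    rw [this, Finset.card_image_of_injective _ (fun a b h => by omega), Nat.card_Ioo]
  intro h4
  omega

theorem stmt_1 (n : ℕ) (M : Finset (Finset ℕ))
    (hM : IsNCMatchingOn M (En n)) :
    ∀ b ∈ M, ∀ x ∈ b, ∀ y ∈ b, x ≠ y → x % 4 ≠ y % 4 := by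
  intro b hb x hx y hy hne
  rcases lt_or_gt_of_ne hne with h | h
  · exact key n M hM b hb x y hx hy h
  · exact (key n M hM b hb y x hy hx h).symm
end

section
/- Let B^e be a noncrossing matching on E_n = {0,2,...,4n-2} and B^o a noncrossing matching on O_n = {1,3,...,4n-1}. Then each pair of B^o crosses an odd number of pairs of B^e. -/
open scoped Classical

lemma pair_exists {b : Finset ℕ} (hb : b.card = 2) : ∃ x y, x < y ∧ b = {x, y} := by
  obtain ⟨x, y, hxy, rfl⟩ := Finset.card_eq_two.mp hb
  rcases lt_or_gt_of_ne hxy with h | h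
  · exact ⟨x, y, h, rfl⟩
  · exact ⟨y, x, h, by rw [Finset.pair_comm]⟩

lemma mem_On_iff {n x : ℕ} : x ∈ On n ↔ Odd x ∧ x < 4 * n := by
  simp only [On, Finset.mem_image, Finset.mem_range]
  constructor
  · rintro ⟨i, hi, rfl⟩
    exact ⟨⟨i, by ring⟩, by omega⟩
  · rintro ⟨⟨m, rfl⟩, h⟩
    exact ⟨m, by omega, by ring⟩

lemma mem_En_iff {n x : ℕ} : x ∈ En n ↔ Even x ∧ x < 4 * n := by
  simp only [En, Finset.mem_image, Finset.mem_range]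
  constructor
  · rintro ⟨i, hi, rfl⟩
    exact ⟨⟨i, by ring⟩, by omega⟩
  · rintro ⟨⟨m, rfl⟩, h⟩
    exact ⟨m, by omega, by ring⟩

lemma cross_pair_iff {i k j l : ℕ} :
    Cross {i, k} {j, l} ↔
      ((∃ a ∈ ({i,k} : Finset ℕ), ∃ b ∈ ({i,k} : Finset ℕ), ∃ c ∈ ({j,l} : Finset ℕ),
          ∃ d ∈ ({j,l} : Finset ℕ), a < c ∧ c < b ∧ b < d) ∨
       (∃ a ∈ ({j,l} : Finset ℕ), ∃ b ∈ ({j,l} : Finset ℕ), ∃ c ∈ ({i,k} : Finset ℕ),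
          ∃ d ∈ ({i,k} : Finset ℕ), a < c ∧ c < b ∧ b < d)) := Iff.rfl

lemma cross_pair_arith {i k j l : ℕ} (hik : i < k) (hjl : j < l)
    (hij : i ≠ j) (hil : i ≠ l) (hkj : k ≠ j) (hkl : k ≠ l) :
    Cross {i, k} {j, l} ↔ (i < j ∧ j < k ∧ k < l) ∨ (j < i ∧ i < l ∧ l < k) := by
  rw [cross_pair_iff]
  simp only [Finset.mem_insert, Finset.mem_singleton]
  constructor
  · rintro (⟨a, (rfl|rfl), b, (rfl|rfl), c, (rfl|rfl), d, (rfl|rfl), h1, h2, h3⟩ |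
            ⟨a, (rfl|rfl), b, (rfl|rfl), c, (rfl|rfl), d, (rfl|rfl), h1, h2, h3⟩) <;> omega
  · rintro (⟨h1, h2, h3⟩ | ⟨h1, h2, h3⟩)
    · exact Or.inl ⟨i, Or.inl rfl, k, Or.inr rfl, j, Or.inl rfl, l, Or.inr rfl, h1, h2, h3⟩
    · exact Or.inr ⟨j, Or.inl rfl, l, Or.inr rfl, i, Or.inl rfl, k, Or.inr rfl, h1, h2, h3⟩

lemma pair_inter_Ioo_card {i k j l : ℕ} (hik : i ≠ k) :
    (({i, k} : Finset ℕ) ∩ Finset.Ioo j l).card =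
      (if j < i ∧ i < l then 1 else 0) + (if j < k ∧ k < l then 1 else 0) := by
  have h : ({i, k} : Finset ℕ) ∩ Finset.Ioo j l = ({i, k} : Finset ℕ).filter (· ∈ Finset.Ioo j l) := by
    ext x
    simp [Finset.mem_filter, Finset.mem_inter, and_comm]
  rw [h]
  rw [Finset.filter_insert, Finset.filter_singleton]
  simp only [Finset.mem_Ioo]
  by_cases hi : j < i ∧ i < l <;> by_cases hk : j < k ∧ k < l <;>
    simp [hi, hk, Finset.card_insert_of_notMem, Finset.mem_singleton, hik]

theorem stmt_2 (n : ℕ) (Be Bo : Finset (Finset ℕ))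
    (hBe : IsNCMatchingOn Be (En n)) (hBo : IsNCMatchingOn Bo (On n)) :
    ∀ o ∈ Bo, Odd (Be.filter (fun e => Cross e o)).card := by
  obtain ⟨⟨hBe2, hBedisj, hBecov⟩, hBenc⟩ := hBe
  obtain ⟨⟨hBo2, hBodisj, hBocov⟩, hBonc⟩ := hBo
  intro o ho
  obtain ⟨j, l, hjl, rfl⟩ := pair_exists (hBo2 o ho)
  have hjOn : j ∈ On n := (hBocov j).mpr ⟨_, ho, by simp⟩
  have hlOn : l ∈ On n := (hBocov l).mpr ⟨_, ho, by simp⟩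
  obtain ⟨⟨aj, haj⟩, hjlt⟩ := mem_On_iff.mp hjOn
  obtain ⟨⟨al, hal⟩, hllt⟩ := mem_On_iff.mp hlOn
  set T := Finset.Ioo j l with hT
  -- elements of blocks
  have hBoOdd : ∀ b ∈ Bo, ∀ x ∈ b, Odd x ∧ x < 4 * n := by
    intro b hb x hx
    exact mem_On_iff.mp ((hBocov x).mpr ⟨b, hb, hx⟩)
  have hBeEven : ∀ b ∈ Be, ∀ x ∈ b, Even x ∧ x < 4 * n := by
    intro b hb x hx
    exact mem_En_iff.mp ((hBecov x).mpr ⟨b, hb, hx⟩)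
  -- Step A: odd numbers in T form an even set
  have hOddT : Even ((T.filter (fun x => ¬ Even x)).card) := by
    have hcovO : T.filter (fun x => ¬ Even x) = (Bo.erase {j, l}).biUnion (fun b => b ∩ T) := by
      ext x
      simp only [Finset.mem_filter, Finset.mem_biUnion, Finset.mem_erase, Finset.mem_inter]
      constructor
      · rintro ⟨hxT, hxodd⟩
        have hxOn : x ∈ On n := mem_On_iff.mpr ⟨Nat.not_even_iff_odd.mp hxodd, by
          have := (Finset.mem_Ioo.mp hxT).2; omega⟩
        obtain ⟨b, hb, hxb⟩ := (hBocov x).mp hxOn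
        refine ⟨b, ⟨?_, hb⟩, hxb, hxT⟩
        rintro rfl
        have := Finset.mem_Ioo.mp hxT
        simp only [Finset.mem_insert, Finset.mem_singleton] at hxb
        omega
      · rintro ⟨b, ⟨hbne, hb⟩, hxb, hxT⟩
        exact ⟨hxT, Nat.not_even_iff_odd.mpr (hBoOdd b hb x hxb).1⟩
    rw [hcovO, Finset.card_biUnion]
    · apply Finset.even_sum
      intro b hb
      have hbBo : b ∈ Bo := Finset.mem_of_mem_erase hb
      have hbne : b ≠ {j, l} := Finset.ne_of_mem_erase hb
      obtain ⟨p, q, hpq, rfl⟩ := pair_exists (hBo2 b hbBo)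
      have hdisj := hBodisj _ hbBo _ ho hbne
      have hp := Finset.disjoint_left.mp hdisj (show p ∈ ({p, q} : Finset ℕ) by simp)
      have hq := Finset.disjoint_left.mp hdisj (show q ∈ ({p, q} : Finset ℕ) by simp)
      simp only [Finset.mem_insert, Finset.mem_singleton, not_or] at hp hq
      obtain ⟨hpj, hpl⟩ := hp
      obtain ⟨hqj, hql⟩ := hq
      have hnc := hBonc _ hbBo _ ho hbne
      rw [cross_pair_arith hpq hjl hpj hpl hqj hql] at hnc
      rw [pair_inter_Ioo_card hpq.ne]
      rw [Nat.even_iff]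
      split_ifs <;> omega
    · intro b hb b' hb' hne
      exact Finset.disjoint_of_subset_left Finset.inter_subset_left
        (Finset.disjoint_of_subset_right Finset.inter_subset_left
          (hBodisj _ (Finset.mem_of_mem_erase hb) _ (Finset.mem_of_mem_erase hb') hne))
  -- Step C: even numbers in T form an odd set
  have hEvenT : Odd ((T.filter (fun x => Even x)).card) := by
    have htot := Finset.card_filter_add_card_filter_not (s := T) (p := fun x => Even x)
    have hTcard : T.card = l - j - 1 := Nat.card_Ioo j l
    rw [Nat.odd_iff]
    rw [Nat.even_iff] at hOddT
    omega
  -- Step B: crossing blocks of Be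
  have hEq : Be.filter (fun e => Cross e {j, l}) = Be.filter (fun e => Odd ((e ∩ T).card)) := by
    apply Finset.filter_congr
    intro e he
    obtain ⟨i, k, hik, rfl⟩ := pair_exists (hBe2 e he)
    obtain ⟨⟨ui, hui⟩, hilt⟩ := hBeEven _ he i (by simp)
    obtain ⟨⟨uk, huk⟩, hklt⟩ := hBeEven _ he k (by simp [Finset.mem_insert])
    have hij : i ≠ j := by omega
    have hil : i ≠ l := by omega
    have hkj : k ≠ j := by omega
    have hkl : k ≠ l := by omega
    rw [cross_pair_arith hik hjl hij hil hkj hkl, pair_inter_Ioo_card hik.ne, Nat.odd_iff]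
    constructor
    · rintro (⟨h1, h2, h3⟩ | ⟨h1, h2, h3⟩) <;> (split_ifs <;> omega)
    · intro h
      split_ifs at h <;> omega
  have hcovE : T.filter (fun x => Even x) = Be.biUnion (fun e => e ∩ T) := by
    ext x
    simp only [Finset.mem_filter, Finset.mem_biUnion, Finset.mem_inter]
    constructor
    · rintro ⟨hxT, hxev⟩
      have hxEn : x ∈ En n := mem_En_iff.mpr ⟨hxev, by
        have := (Finset.mem_Ioo.mp hxT).2; omega⟩
      obtain ⟨e, he, hxe⟩ := (hBecov x).mp hxEn
      exact ⟨e, he, hxe, hxT⟩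
    · rintro ⟨e, he, hxe, hxT⟩
      exact ⟨hxT, (hBeEven e he x hxe).1⟩
  have hsum : (T.filter (fun x => Even x)).card = ∑ e ∈ Be, (e ∩ T).card := by
    rw [hcovE, Finset.card_biUnion]
    intro b hb b' hb' hne
    exact Finset.disjoint_of_subset_left Finset.inter_subset_left
      (Finset.disjoint_of_subset_right Finset.inter_subset_left (hBedisj _ hb _ hb' hne))
  rw [hEq, ← Finset.odd_sum_iff_odd_card_odd, ← hsum]
  exact hEvenT
end

section
/- Let Q be a noncrossing partition of {0,1,...,4n-1} into n blocks each of size 4, and let K = {a < b < c < d} be a block of Q. Then each of the four sets (a,b), (b,c), (c,d), and (d,4n-1] ∪ [0,a) (the cyclic gaps between consecutive elements of K) has cardinality divisible by 4. -/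
open scoped Classical

theorem stmt_4 (n : ℕ) (Q : Finset (Finset ℕ))
    (hQ : IsNCPartitionOn Q (Finset.range (4 * n)))
    (hcard : Q.card = n) (hblocks : ∀ b ∈ Q, b.card = 4)
    (a b c d : ℕ) (hab : a < b) (hbc : b < c) (hcd : c < d)
    (hK : ({a, b, c, d} : Finset ℕ) ∈ Q) :
    4 ∣ (Finset.Ioo a b).card ∧ 4 ∣ (Finset.Ioo b c).card ∧
    4 ∣ (Finset.Ioo c d).card ∧
    4 ∣ (Finset.Ico (d + 1) (4 * n) ∪ Finset.range a).card := by

  obtain ⟨hne, hdisj, hcov, hnc⟩ := hQ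
  set K : Finset ℕ := {a, b, c, d} with hKdef
  have haK : a ∈ K := by simp [hKdef]
  have hbK : b ∈ K := by simp [hKdef]
  have hcK : c ∈ K := by simp [hKdef]
  have hdK : d ∈ K := by simp [hKdef]
  have hd4 : d < 4 * n := Finset.mem_range.mp ((hcov d).mpr ⟨K, hK, hdK⟩)
  -- key separation lemma: blocks other than K stay within an interval (u,v) for u,v ∈ K
  have M : ∀ B ∈ Q, B ≠ K → ∀ u ∈ K, ∀ v ∈ K, ∀ x ∈ B, ∀ y ∈ B,
      u < x → x < v → u < y ∧ y < v := by
    intro B hB hBK u hu v hv x hx y hy hux hxv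
    have hncKB := hnc K hK B hB (Ne.symm hBK)
    have hyK : y ∉ K := Finset.disjoint_left.mp (hdisj B hB K hK hBK) hy
    have hyu : y ≠ u := fun h => hyK (h ▸ hu)
    have hyv : y ≠ v := fun h => hyK (h ▸ hv)
    constructor
    · by_contra h
      exact hncKB (Or.inr ⟨y, hy, x, hx, u, hu, v, hv, by omega, hux, hxv⟩)
    · by_contra h
      exact hncKB (Or.inl ⟨u, hu, v, hv, x, hx, y, hy, hux, hxv, by omega⟩)
  have hnK : ∀ B ∈ Q, B ≠ K → ∀ z ∈ B, z ∉ K := fun B hB hBK z hz =>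
    Finset.disjoint_left.mp (hdisj B hB K hK hBK) hz
  -- counting lemma
  have count : ∀ (G : Finset ℕ), (∀ x ∈ G, ∃ B ∈ Q, B ⊆ G ∧ x ∈ B) → 4 ∣ G.card := by
    intro G hG
    have hGeq : G = (Q.filter (fun B => B ⊆ G)).biUnion id := by
      ext x
      simp only [Finset.mem_biUnion, Finset.mem_filter, id]
      constructor
      · intro hx
        obtain ⟨B, hB, hBG, hxB⟩ := hG x hx
        exact ⟨B, ⟨hB, hBG⟩, hxB⟩
      · rintro ⟨B, ⟨hB, hBG⟩, hxB⟩
        exact hBG hxB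
    rw [hGeq, Finset.card_biUnion]
    · simp only [id]
      rw [Finset.sum_congr rfl (fun B hB => hblocks B (Finset.mem_filter.mp hB).1)]
      rw [Finset.sum_const, smul_eq_mul]
      exact dvd_mul_left 4 _
    · intro B hB B' hB' hne'
      exact hdisj B (Finset.mem_filter.mp hB).1 B' (Finset.mem_filter.mp hB').1 hne'
  -- inner gaps
  have gap : ∀ u ∈ K, ∀ v ∈ K, ∀ x, u < x → x < v → x < 4 * n → x ∉ K →
      ∃ B ∈ Q, B ⊆ Finset.Ioo u v ∧ x ∈ B := by
    intro u hu v hv x hux hxv hx4 hxK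
    obtain ⟨B, hB, hxB⟩ := (hcov x).mp (Finset.mem_range.mpr hx4)
    have hBK : B ≠ K := fun h => hxK (h ▸ hxB)
    refine ⟨B, hB, ?_, hxB⟩
    intro z hz
    have := M B hB hBK u hu v hv x hxB z hz hux hxv
    exact Finset.mem_Ioo.mpr this
  have hKne : ∀ x, a < x → x < d → x ∉ K → (x ≠ a ∧ x ≠ b ∧ x ≠ c ∧ x ≠ d) := by
    intro x _ _ hx
    simpa [hKdef] using hx
  have notK : ∀ x, x ≠ a → x ≠ b → x ≠ c → x ≠ d → x ∉ K := by
    intro x h1 h2 h3 h4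
    simp [hKdef, h1, h2, h3, h4]
  refine ⟨?_, ?_, ?_, ?_⟩
  · apply count
    intro x hx
    rw [Finset.mem_Ioo] at hx
    exact gap a haK b hbK x hx.1 hx.2 (by omega) (notK x (by omega) (by omega) (by omega) (by omega))
  · apply count
    intro x hx
    rw [Finset.mem_Ioo] at hx
    exact gap b hbK c hcK x hx.1 hx.2 (by omega) (notK x (by omega) (by omega) (by omega) (by omega))
  · apply count
    intro x hx
    rw [Finset.mem_Ioo] at hx
    exact gap c hcK d hdK x hx.1 hx.2 (by omega) (notK x (by omega) (by omega) (by omega) (by omega))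
  · apply count
    intro x hx
    have hx' : (d < x ∧ x < 4 * n) ∨ x < a := by
      rcases Finset.mem_union.mp hx with h | h
      · exact Or.inl (by have := Finset.mem_Ico.mp h; omega)
      · exact Or.inr (Finset.mem_range.mp h)
    have hx4 : x < 4 * n := by omega
    have hxK : x ∉ K := notK x (by omega) (by omega) (by omega) (by omega)
    obtain ⟨B, hB, hxB⟩ := (hcov x).mp (Finset.mem_range.mpr hx4)
    have hBK : B ≠ K := fun h => hxK (h ▸ hxB)
    refine ⟨B, hB, ?_, hxB⟩
    intro z hz
    have hz4 : z < 4 * n := Finset.mem_range.mp ((hcov z).mpr ⟨B, hB, hz⟩)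
    have hzK : z ∉ K := hnK B hB hBK z hz
    have hzo : z < a ∨ d < z := by
      by_contra h
      push_neg at h
      have hza : a < z := by
        rcases lt_or_eq_of_le h.1 with h' | h'
        · exact h'
        · exact absurd (h' ▸ haK) hzK
      have hzd : z < d := by
        rcases lt_or_eq_of_le h.2 with h' | h'
        · exact h'
        · exact absurd (h'.symm ▸ hdK) hzK
      have := M B hB hBK a haK d hdK z hz x hxB hza hzd
      omega
    rcases hzo with h | h
    · exact Finset.mem_union.mpr (Or.inr (Finset.mem_range.mpr h))
    · exact Finset.mem_union.mpr (Or.inl (Finset.mem_Ico.mpr ⟨by omega, hz4⟩))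
end

section
/- Let Q be a noncrossing partition of {0,1,...,4n-1} into blocks each of size 4, and let {a < b < c < d} be a block of Q. Then a ≡ c (mod 2), b ≡ d (mod 2), and a ≢ b (mod 2). -/
open scoped Classical

lemma gap_parity (n : ℕ) (Q : Finset (Finset ℕ))
    (hQ : IsNCPartitionOn Q (Finset.range (4 * n)))
    (hblocks : ∀ b ∈ Q, b.card = 4)
    (K : Finset ℕ) (hK : K ∈ Q) (x y : ℕ) (hx : x ∈ K) (hy : y ∈ K)
    (hxy : x < y) (hmid : ∀ t ∈ K, ¬ (x < t ∧ t < y)) :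
    x % 2 ≠ y % 2 := by
  obtain ⟨hne, hdisj, hcov, hnc⟩ := hQ
  set B := Q.filter (fun b' => b' ⊆ Finset.Ioo x y) with hB
  have hsub : ∀ t, x < t → t < y → ∃ b' ∈ B, t ∈ b' := by
    intro t hxt hty
    have hy4 : y ∈ Finset.range (4 * n) := (hcov y).2 ⟨K, hK, hy⟩
    have ht4 : t ∈ Finset.range (4 * n) := by
      simp only [Finset.mem_range] at *; omega
    obtain ⟨b', hb', htb'⟩ := (hcov t).1 ht4
    have hbK : b' ≠ K := by
      rintro rfl; exact hmid t htb' ⟨hxt, hty⟩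
    refine ⟨b', Finset.mem_filter.2 ⟨hb', ?_⟩, htb'⟩
    intro z hz
    have hzK : z ∉ K := Finset.disjoint_left.mp (hdisj b' hb' K hK hbK) hz
    have hzx : z ≠ x := fun h => hzK (h ▸ hx)
    have hzy : z ≠ y := fun h => hzK (h ▸ hy)
    have hncross : ¬ Cross b' K := hnc b' hb' K hK hbK
    rw [Finset.mem_Ioo]
    by_contra hcon
    rcases Nat.lt_or_ge z x with h1 | h1
    · exact hncross (Or.inl ⟨z, hz, t, htb', x, hx, y, hy, h1, hxt, hty⟩)
    · have h2 : y < z := by omega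
      exact hncross (Or.inr ⟨x, hx, y, hy, t, htb', z, hz, hxt, hty, h2⟩)
  have hunion : Finset.Ioo x y = B.biUnion id := by
    ext t
    simp only [Finset.mem_biUnion, Finset.mem_Ioo, id]
    constructor
    · rintro ⟨h1, h2⟩; exact hsub t h1 h2
    · rintro ⟨b', hb', htb'⟩
      exact Finset.mem_Ioo.1 ((Finset.mem_filter.1 hb').2 htb')
  have hpd : ∀ b1 ∈ B, ∀ b2 ∈ B, b1 ≠ b2 → Disjoint (id b1) (id b2) := by
    intro b1 h1 b2 h2 hne'
    exact hdisj b1 (Finset.mem_filter.1 h1).1 b2 (Finset.mem_filter.1 h2).1 hne'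
  have hcard : (Finset.Ioo x y).card = 4 * B.card := by
    rw [hunion, Finset.card_biUnion hpd]
    have h4 : ∀ b' ∈ B, (id b' : Finset ℕ).card = 4 :=
      fun b' hb' => hblocks b' (Finset.mem_filter.1 hb').1
    rw [Finset.sum_congr rfl h4, Finset.sum_const, smul_eq_mul, mul_comm]
  rw [Nat.card_Ioo] at hcard
  omega

theorem stmt_5 (n : ℕ) (Q : Finset (Finset ℕ))
    (hQ : IsNCPartitionOn Q (Finset.range (4 * n)))
    (hblocks : ∀ b ∈ Q, b.card = 4)
    (a b c d : ℕ) (hab : a < b) (hbc : b < c) (hcd : c < d)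
    (hK : ({a, b, c, d} : Finset ℕ) ∈ Q) :
    a % 2 = c % 2 ∧ b % 2 = d % 2 ∧ a % 2 ≠ b % 2 := by
  have ha : a ∈ ({a, b, c, d} : Finset ℕ) := by simp
  have hb : b ∈ ({a, b, c, d} : Finset ℕ) := by simp
  have hc : c ∈ ({a, b, c, d} : Finset ℕ) := by simp
  have hd : d ∈ ({a, b, c, d} : Finset ℕ) := by simp
  have hmem : ∀ t ∈ ({a, b, c, d} : Finset ℕ), t = a ∨ t = b ∨ t = c ∨ t = d := by
    intro t ht; simpa using ht
  have h1 : a % 2 ≠ b % 2 := by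
    refine gap_parity n Q hQ hblocks _ hK a b ha hb hab ?_
    intro t ht; have := hmem t ht; omega
  have h2 : b % 2 ≠ c % 2 := by
    refine gap_parity n Q hQ hblocks _ hK b c hb hc hbc ?_
    intro t ht; have := hmem t ht; omega
  have h3 : c % 2 ≠ d % 2 := by
    refine gap_parity n Q hQ hblocks _ hK c d hc hd hcd ?_
    intro t ht; have := hmem t ht; omega
  omega
end
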